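/- arXiv:2407.09160 — 2 statements merged into one kernel-verified Lean document; each statement's English description precedes it below -/
import Mathlib

section
/- Let M_1,…,M_k be matroids on the same finite ground set V, let H = (V, circ(M_1) ∪ … ∪ circ(M_k)), let v ∈ V, and let C_1,…,C_t be all the circuits C of M_1 such that v ∈ C and C is independent in M_i for every i ∈ {2,…,k}. Then for each j ∈ {1,…,t}, the hypergraphs (H − C_1 − ⋯ − C_{j−1}) / C_j and H / C_j have the same independent sets: I((H − C_1 − ⋯ − C_{j−1}) / C_j) = I(H / C_j). -/
/-- A matroid on a finite ground set `V`, identified with its collection of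
independent sets (here given as a predicate on `Finset V`). -/
structure FinMatroid (V : Type*) [DecidableEq V] where
  Indep : Finset V → Prop
  empty_indep : Indep ∅
  subset_indep : ∀ ⦃S T : Finset V⦄, Indep T → S ⊆ T → Indep S
  augment : ∀ ⦃S T : Finset V⦄, Indep S → Indep T → S.card < T.card →
    ∃ v ∈ T, v ∉ S ∧ Indep (insert v S)

/-- `C` is a circuit of the matroid `M`: a minimal dependent set. -/
def IsCircuit {V : Type*} [DecidableEq V] (M : FinMatroid V) (C : Finset V) : Prop :=
  ¬ M.Indep C ∧ ∀ x ∈ C, M.Indep (C.erase x)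

/-- The set of circuits of a matroid, i.e. the edge set of its circuit
representation as a hypergraph. -/
def circSet {V : Type*} [DecidableEq V] (M : FinMatroid V) : Set (Finset V) :=
  {C | IsCircuit M C}

/-- A set `S` is independent in the hypergraph with edge set `E` if no edge is
contained in `S`. -/
def HypIndep {V : Type*} (E : Set (Finset V)) (S : Finset V) : Prop :=
  ∀ e ∈ E, ¬ e ⊆ S

/-- The edge set of the contraction `H / X` of a hypergraph with edge set `E`:
`{e \ X : e ∈ E, e ⊄ X}`. -/
def contractE {V : Type*} [DecidableEq V] (E : Set (Finset V)) (X : Finset V) :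
    Set (Finset V) :=
  {f | ∃ e ∈ E, ¬ e ⊆ X ∧ f = e \ X}

/-- Every dependent set contains a circuit. -/
theorem exists_circuit_subset {V : Type*} [DecidableEq V] (M : FinMatroid V) :
    ∀ S : Finset V, ¬ M.Indep S → ∃ D ⊆ S, IsCircuit M D := by
  intro S
  induction S using Finset.strongInduction with
  | _ S ih =>
    intro hS
    by_cases h : ∀ x ∈ S, M.Indep (S.erase x)
    · exact ⟨S, subset_rfl, hS, h⟩
    · push_neg at h
      obtain ⟨x, hx, hdep⟩ := h
      obtain ⟨D, hDsub, hD⟩ := ih (S.erase x) (Finset.erase_ssubset hx) hdep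
      exact ⟨D, hDsub.trans (Finset.erase_subset _ _), hD⟩

/-- Extend an independent subset of `A` to one maximal within `A`. -/
theorem exists_maximal_indep {V : Type*} [DecidableEq V] (M : FinMatroid V)
    (A : Finset V) : ∀ n : ℕ, ∀ I : Finset V, A.card - I.card ≤ n → M.Indep I → I ⊆ A →
    ∃ B, I ⊆ B ∧ B ⊆ A ∧ M.Indep B ∧ ∀ z ∈ A, M.Indep (insert z B) → z ∈ B := by
  intro n
  induction n with
  | zero =>
    intro I hcard hI hIA
    refine ⟨I, subset_rfl, hIA, hI, fun z hz hins => ?_⟩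
    by_contra hzI
    have : I ⊂ A := Finset.ssubset_iff_of_subset hIA |>.mpr ⟨z, hz, hzI⟩
    have := Finset.card_lt_card this
    omega
  | succ n ihn =>
    intro I hcard hI hIA
    by_cases h : ∃ z ∈ A, z ∉ I ∧ M.Indep (insert z I)
    · obtain ⟨z, hzA, hzI, hins⟩ := h
      have hcard2 : A.card - (insert z I).card ≤ n := by
        rw [Finset.card_insert_of_notMem hzI]
        have : I.card < A.card := Finset.card_lt_card
          (Finset.ssubset_iff_of_subset hIA |>.mpr ⟨z, hzA, hzI⟩)
        omega
      obtain ⟨B, hB1, hB2, hB3, hB4⟩ := ihn (insert z I) hcard2 hins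
        (Finset.insert_subset hzA hIA)
      exact ⟨B, (Finset.subset_insert _ _).trans hB1, hB2, hB3, hB4⟩
    · push_neg at h
      refine ⟨I, subset_rfl, hIA, hI, fun z hz hins => ?_⟩
      by_contra hzI
      exact h z hz hzI hins

/-- Weak circuit elimination. -/
theorem circuit_elimination {V : Type*} [DecidableEq V] (M : FinMatroid V)
    {C₁ C₂ : Finset V} {v : V} (h1 : IsCircuit M C₁) (h2 : IsCircuit M C₂)
    (hne : C₁ ≠ C₂) (hv1 : v ∈ C₁) (hv2 : v ∈ C₂) :
    ∃ D, IsCircuit M D ∧ D ⊆ (C₁ ∪ C₂).erase v := by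
  have hnsub : ¬ C₁ ⊆ C₂ := by
    intro hsub
    obtain ⟨y, hy, hyn⟩ := Finset.exists_of_ssubset (hsub.ssubset_of_ne hne)
    exact h1.1 (M.subset_indep (h2.2 y hy) (fun a ha => Finset.mem_erase.mpr
      ⟨fun h => hyn (h ▸ ha), hsub ha⟩))
  obtain ⟨x, hxC1, hxC2⟩ := Finset.not_subset.mp hnsub
  -- Suppose X := (C₁ ∪ C₂).erase v is independent; derive contradiction.
  suffices hdep : ¬ M.Indep ((C₁ ∪ C₂).erase v) by
    obtain ⟨D, hDsub, hD⟩ := exists_circuit_subset M _ hdep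
    exact ⟨D, hD, hDsub⟩
  intro hX
  set A := C₁ ∪ C₂ with hA
  -- maximal independent B in A containing C₁.erase x
  have hI : M.Indep (C₁.erase x) := h1.2 x hxC1
  have hIA : C₁.erase x ⊆ A := (Finset.erase_subset _ _).trans Finset.subset_union_left
  obtain ⟨B, hB1, hB2, hB3, hB4⟩ := exists_maximal_indep M A (A.card) (C₁.erase x)
    (by omega) hI hIA
  have hxB : x ∉ B := by
    intro hxB
    have : C₁ ⊆ B := by
      intro a ha
      by_cases hax : a = x
      · exact hax ▸ hxB
      · exact hB1 (Finset.mem_erase.mpr ⟨hax, ha⟩)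
    exact h1.1 (M.subset_indep hB3 this)
  have : ¬ C₂ ⊆ B := fun hsub => h2.1 (M.subset_indep hB3 hsub)
  obtain ⟨y, hyC2, hyB⟩ := Finset.not_subset.mp this
  have hxy : x ≠ y := fun h => hxC2 (h ▸ hyC2)
  -- B ⊆ A \ {x, y}, so card B ≤ card A - 2 < card X = card A - 1
  have hBsub : B ⊆ (A.erase x).erase y := by
    intro a ha
    exact Finset.mem_erase.mpr ⟨fun h => hyB (h ▸ ha),
      Finset.mem_erase.mpr ⟨fun h => hxB (h ▸ ha), hB2 ha⟩⟩
  have hcardB : B.card ≤ A.card - 2 := by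
    have := Finset.card_le_card hBsub
    have hx' : x ∈ A := Finset.mem_union_left _ hxC1
    have hy' : y ∈ A.erase x := Finset.mem_erase.mpr ⟨fun h => hxy h.symm, Finset.mem_union_right _ hyC2⟩
    rw [Finset.card_erase_of_mem hy', Finset.card_erase_of_mem hx'] at this
    omega
  have hvA : v ∈ A := Finset.mem_union_left _ hv1
  have hcardX : (A.erase v).card = A.card - 1 := Finset.card_erase_of_mem hvA
  have hlt : B.card < (A.erase v).card := by
    have h2le : 2 ≤ A.card := by
      have : ({x, v} : Finset V) ⊆ A := by
        intro a ha
        rcases Finset.mem_insert.mp ha with h | h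
        · exact h ▸ Finset.mem_union_left _ hxC1
        · exact (Finset.mem_singleton.mp h) ▸ hvA
      have := Finset.card_le_card this
      rwa [Finset.card_insert_of_notMem (by simp only [Finset.mem_singleton]; exact fun h => hxC2 (h ▸ hv2)),
        Finset.card_singleton] at this
    omega
  obtain ⟨z, hzX, hzB, hzind⟩ := M.augment hB3 hX hlt
  have hzA : z ∈ A := Finset.mem_of_mem_erase hzX
  exact hzB (hB4 z hzA hzind)

/-- Equation (2) of the Claim: with `H = (V, circ(M_1) ∪ … ∪ circ(M_k))`, `v ∈ V`,
and `C_1,…,C_t` an enumeration of all circuits of `M_1` containing `v` and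
independent in each `M_2,…,M_k`, for each `j` the hypergraphs
`(H − C_1 − ⋯ − C_{j-1}) / C_j` and `H / C_j` have the same independent sets.
(Here `M_1` is `M 0` and `M_2,…,M_k` are the `M i` with `i ≠ 0`.) -/

theorem indep_contract_delete_eq_indep_contract {V : Type*} [DecidableEq V] [Fintype V]
    (k t : ℕ) (M : Fin (k + 1) → FinMatroid V) (v : V)
    (C : Fin t → Finset V) (hinj : Function.Injective C)
    (hrange : ∀ e : Finset V, (∃ j, C j = e) ↔
      (IsCircuit (M 0) e ∧ v ∈ e ∧ ∀ i, i ≠ 0 → (M i).Indep e)) :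
    ∀ j : Fin t, ∀ S : Finset V, Disjoint S (C j) →
      (HypIndep (contractE ((⋃ i, circSet (M i)) \ {e | ∃ l, l < j ∧ C l = e}) (C j)) S ↔
        HypIndep (contractE (⋃ i, circSet (M i)) (C j)) S) := by
  intro j S hdisj
  constructor
  swap
  · -- easy: fewer edges
    intro hfull f hf hfS
    obtain ⟨e, he, hne, rfl⟩ := hf
    exact hfull _ ⟨e, he.1, hne, rfl⟩ hfS
  · intro hred f hf hfS
    obtain ⟨e, he, hne, rfl⟩ := hf
    by_cases hrem : ∃ l, l < j ∧ C l = e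
    · -- e is a removed circuit C l with l < j
      obtain ⟨l, hl, rfl⟩ := hrem
      have hCl := (hrange (C l)).mp ⟨l, rfl⟩
      have hCj := (hrange (C j)).mp ⟨j, rfl⟩
      have hnej : C l ≠ C j := fun h => (Fin.lt_iff_val_lt_val.mp hl).ne (congrArg Fin.val (hinj h))
      obtain ⟨D, hD, hDsub⟩ := circuit_elimination (M 0) hCl.1 hCj.1 hnej hCl.2.1 hCj.2.1
      have hvD : v ∉ D := fun h => (Finset.mem_erase.mp (hDsub h)).1 rfl
      have hDE : D ∈ ⋃ i, circSet (M i) := Set.mem_iUnion.mpr ⟨0, hD⟩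
      have hDnrem : ¬ ∃ l', l' < j ∧ C l' = D := by
        rintro ⟨l', _, rfl⟩
        exact hvD ((hrange (C l')).mp ⟨l', rfl⟩).2.1
      have hDnsub : ¬ D ⊆ C j := by
        intro hsub
        apply hD.1
        exact (M 0).subset_indep (hCj.1.2 v hCj.2.1)
          (fun a ha => Finset.mem_erase.mpr ⟨fun h => hvD (h ▸ ha), hsub ha⟩)
      refine hred (D \ C j) ⟨D, ⟨hDE, hDnrem⟩, hDnsub, rfl⟩ ?_
      intro a ha
      have haD := (Finset.mem_sdiff.mp ha).1
      have haCj := (Finset.mem_sdiff.mp ha).2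
      have : a ∈ (C l ∪ C j).erase v := hDsub haD
      have : a ∈ C l ∪ C j := Finset.mem_of_mem_erase this
      rcases Finset.mem_union.mp this with h | h
      · exact hfS (Finset.mem_sdiff.mpr ⟨h, haCj⟩)
      · exact absurd h haCj
    · exact hred _ ⟨e, ⟨he, hrem⟩, hne, rfl⟩ hfS
end

section
/- Let M be a matroid on a finite ground set V, let C be a circuit of M, and let A be an independent set of M. Then there exists a set S ⊆ V with |S| = |C| − 1 and A ∩ C ⊆ S such that A \ S is independent in the contraction M / C. -/
/-- Independence in the contraction `M / X`, a matroid on the ground set `V \ X`: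
a set `S ⊆ V \ X` is independent in `M / X` iff it contains no set of the form
`C' \ X` for a circuit `C'` of `M` with `C' ⊄ X`. -/
def ContractIndep {V : Type*} [DecidableEq V] (M : FinMatroid V) (X S : Finset V) : Prop :=
  Disjoint S X ∧ ∀ C' : Finset V, IsCircuit M C' → ¬ C' ⊆ X → ¬ C' \ X ⊆ S

open scoped Classical

section Aux

variable {V : Type*} [DecidableEq V]

/-- The rank of a finite set: the max cardinality of an independent subset. -/
noncomputable def rk (M : FinMatroid V) (D : Finset V) : ℕ :=
  (D.powerset.filter (fun S => M.Indep S)).sup Finset.card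

lemma le_rk (M : FinMatroid V) {D I : Finset V} (hID : I ⊆ D) (hI : M.Indep I) :
    I.card ≤ rk M D := by
  apply Finset.le_sup
  simp [Finset.mem_powerset, hID, hI]

lemma rk_le_card (M : FinMatroid V) (D : Finset V) : rk M D ≤ D.card := by
  apply Finset.sup_le
  intro S hS
  simp only [Finset.mem_filter, Finset.mem_powerset] at hS
  exact Finset.card_le_card hS.1

lemma rk_mono (M : FinMatroid V) {D E : Finset V} (h : D ⊆ E) : rk M D ≤ rk M E := by
  apply Finset.sup_le
  intro S hS
  simp only [Finset.mem_filter, Finset.mem_powerset] at hS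
  exact le_rk M (hS.1.trans h) hS.2

lemma rk_attained (M : FinMatroid V) (D : Finset V) :
    ∃ I, I ⊆ D ∧ M.Indep I ∧ I.card = rk M D := by
  have hne : (D.powerset.filter (fun S => M.Indep S)).Nonempty := by
    refine ⟨∅, ?_⟩
    simp [M.empty_indep]
  obtain ⟨I, hI, hIc⟩ := Finset.exists_mem_eq_sup _ hne Finset.card
  simp only [Finset.mem_filter, Finset.mem_powerset] at hI
  exact ⟨I, hI.1, hI.2, hIc.symm⟩

lemma rk_eq_card_of_indep (M : FinMatroid V) {D : Finset V} (hD : M.Indep D) :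
    rk M D = D.card :=
  le_antisymm (rk_le_card M D) (le_rk M subset_rfl hD)

lemma rk_lt_card_of_dep (M : FinMatroid V) {D : Finset V} (hD : ¬ M.Indep D) :
    rk M D < D.card := by
  rcases lt_or_eq_of_le (rk_le_card M D) with h | h
  · exact h
  · exfalso
    obtain ⟨I, hID, hI, hIc⟩ := rk_attained M D
    have : I = D := Finset.eq_of_subset_of_card_le hID (by omega)
    exact hD (this ▸ hI)

/-- Greedy extension of an independent subset of `D` to a maximal one. -/
lemma exists_max_ext (M : FinMatroid V) {D : Finset V} :
    ∀ n (J : Finset V), D.card - J.card ≤ n → J ⊆ D → M.Indep J →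
      ∃ I, J ⊆ I ∧ I ⊆ D ∧ M.Indep I ∧ ∀ v ∈ D, v ∉ I → ¬ M.Indep (insert v I) := by
  intro n
  induction n with
  | zero =>
    intro J hn hJD hJ
    have : J = D := Finset.eq_of_subset_of_card_le hJD (by omega)
    subst this
    exact ⟨J, subset_rfl, subset_rfl, hJ, fun v hv hv' => absurd hv hv'⟩
  | succ n ih =>
    intro J hn hJD hJ
    by_cases h : ∃ v ∈ D, v ∉ J ∧ M.Indep (insert v J)
    · obtain ⟨v, hvD, hvJ, hvind⟩ := h
      have hcard : (insert v J).card = J.card + 1 := Finset.card_insert_of_notMem hvJ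
      have hJlt : J.card < D.card := Finset.card_lt_card (Finset.ssubset_iff_of_subset hJD |>.2 ⟨v, hvD, hvJ⟩)
      obtain ⟨I, hI1, hI2, hI3, hI4⟩ := ih (insert v J) (by omega)
        (Finset.insert_subset hvD hJD) hvind
      exact ⟨I, (Finset.subset_insert v J).trans hI1, hI2, hI3, hI4⟩
    · push_neg at h
      exact ⟨J, subset_rfl, hJD, hJ, fun v hv hv' => h v hv hv'⟩

/-- If `Cc` is dependent, `y ∈ Cc`, `Cc \ {y}` is independent and contained in `D`,
then adding `y` to `D` does not increase the rank. -/
lemma rk_insert_eq (M : FinMatroid V) {Cc D : Finset V} {y : V}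
    (hdep : ¬ M.Indep Cc) (hy : y ∈ Cc) (hind : M.Indep (Cc.erase y))
    (hsub : Cc.erase y ⊆ D) : rk M (insert y D) = rk M D := by
  refine le_antisymm ?_ (rk_mono M (Finset.subset_insert y D))
  obtain ⟨I, hID, hI, hIc⟩ := rk_attained M (insert y D)
  rw [← hIc]
  by_cases hyI : y ∈ I
  · -- get a maximal extension of Cc.erase y inside D
    obtain ⟨J, hJ1, hJ2, hJ3, hJ4⟩ := exists_max_ext M D.card (Cc.erase y)
      (by omega) hsub hind
    rcases le_or_gt I.card J.card with hle | hlt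
    · exact hle.trans (le_rk M hJ2 hJ3)
    · exfalso
      obtain ⟨v, hvI, hvJ, hvind⟩ := M.augment hJ3 hI hlt
      have hvD : v ∈ insert y D := hID hvI
      rcases Finset.mem_insert.1 hvD with rfl | hvD'
      · -- v = y : insert y J ⊇ Cc, contradiction
        have hCc : Cc ⊆ insert v J := by
          intro c hc
          rcases eq_or_ne c v with rfl | hcv
          · exact Finset.mem_insert_self _ _
          · exact Finset.mem_insert_of_mem (hJ1 (Finset.mem_erase.2 ⟨hcv, hc⟩))
        exact hdep (M.subset_indep hvind hCc)
      · exact hJ4 v hvD' hvJ hvind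
  · have : I ⊆ D := fun a ha => by
      rcases Finset.mem_insert.1 (hID ha) with rfl | h
      · exact absurd ha hyI
      · exact h
    exact le_rk M this hI

end Aux

/-- For a circuit `C` of `M` and an independent set `A` of `M`, there is a set `S`
of size `|C| − 1` with `A ∩ C ⊆ S` such that `A \ S` is independent in `M / C`. -/
theorem exists_removal_set_contract_indep {V : Type*} [DecidableEq V] [Fintype V]
    (M : FinMatroid V) (C A : Finset V) (hC : IsCircuit M C) (hA : M.Indep A) :
    ∃ S : Finset V, S.card = C.card - 1 ∧ A ∩ C ⊆ S ∧ ContractIndep M C (A \ S) := by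
  -- C is nonempty
  have hCne : C.Nonempty := by
    rcases Finset.eq_empty_or_nonempty C with rfl | h
    · exact absurd M.empty_indep hC.1
    · exact h
  obtain ⟨x, hxC⟩ := hCne
  set B : Finset V := C.erase x with hB
  have hBind : M.Indep B := hC.2 x hxC
  have hBcard : B.card = C.card - 1 := Finset.card_erase_of_mem hxC
  have hBC : B ⊆ C := Finset.erase_subset x C
  -- extend B to a maximal independent set K inside (A \ C) ∪ B
  set D0 : Finset V := (A \ C) ∪ B with hD0
  obtain ⟨K, hBK, hKD0, hKind, hKmax⟩ := exists_max_ext M (D := D0) D0.card B (by omega)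
    Finset.subset_union_right hBind
  set T : Finset V := K \ C with hT
  have hxK : x ∉ K := fun h => by
    rcases Finset.mem_union.1 (hKD0 h) with h' | h'
    · exact (Finset.mem_sdiff.1 h').2 hxC
    · exact (Finset.mem_erase.1 h').1 rfl
  -- K ∩ C = B
  have hKC : K ∩ C = B := by
    apply Finset.Subset.antisymm
    · intro a ha
      have haK := (Finset.mem_inter.1 ha).1
      have haC := (Finset.mem_inter.1 ha).2
      rcases Finset.mem_union.1 (hKD0 haK) with h' | h'
      · exact absurd haC (Finset.mem_sdiff.1 h').2
      · exact h'
    · intro a ha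
      exact Finset.mem_inter.2 ⟨hBK ha, hBC ha⟩
  have hTA : T ⊆ A \ C := by
    intro a ha
    have haK := (Finset.mem_sdiff.1 ha).1
    have haC := (Finset.mem_sdiff.1 ha).2
    rcases Finset.mem_union.1 (hKD0 haK) with h' | h'
    · exact h'
    · exact absurd (hBC h') haC
  have hTdisjC : Disjoint T C := Finset.sdiff_disjoint
  have hKTB : K = T ∪ B := by
    have : K = (K \ C) ∪ (K ∩ C) := by
      rw [Finset.sdiff_union_inter]
    rw [this, hKC]
  have hTBdisj : Disjoint T B := hTdisjC.mono_right hBC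
  have hKcard : K.card = T.card + B.card := by
    rw [hKTB, Finset.card_union_of_disjoint hTBdisj]
  -- |K| ≥ |A|
  have hKA : A.card ≤ K.card := by
    by_contra h
    push_neg at h
    obtain ⟨v, hvA, hvK, hvind⟩ := M.augment hKind hA h
    by_cases hvC : v ∈ C
    · rcases eq_or_ne v x with rfl | hvx
      · have hCsub : C ⊆ insert v K := by
          intro c hc
          rcases eq_or_ne c v with rfl | hcv
          · exact Finset.mem_insert_self _ _
          · exact Finset.mem_insert_of_mem (hBK (Finset.mem_erase.2 ⟨hcv, hc⟩))
        exact hC.1 (M.subset_indep hvind hCsub)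
      · exact hvK (hBK (Finset.mem_erase.2 ⟨hvx, hvC⟩))
    · exact hKmax v (Finset.mem_union.2 (Or.inl (Finset.mem_sdiff.2 ⟨hvA, hvC⟩))) hvK hvind
  -- T is independent in the contraction M / C
  have hTcontract : ContractIndep M C T := by
    refine ⟨hTdisjC, ?_⟩
    intro C' hC' hC'C hsub
    -- pick t ∈ C' \ C ⊆ T
    have hne : (C' \ C).Nonempty := by
      rw [Finset.sdiff_nonempty]; exact hC'C
    obtain ⟨t, ht⟩ := hne
    have htC' : t ∈ C' := (Finset.mem_sdiff.1 ht).1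
    have htnC : t ∉ C := (Finset.mem_sdiff.1 ht).2
    have htT : t ∈ T := hsub ht
    -- rk (T ∪ C) = |T| + |C| - 1
    have hTC : T ∪ C = insert x K := by
      rw [hKTB]
      have : C = insert x B := (Finset.insert_erase hxC).symm
      rw [this, Finset.union_insert]
    have h1 : rk M (insert x K) = K.card := by
      rw [rk_insert_eq M hC.1 hxC hBind (hB ▸ hBK), rk_eq_card_of_indep M hKind]
    -- rk (T ∪ C) = rk ((T.erase t) ∪ C)
    have hC'sub : C' ⊆ T ∪ C := by
      intro c hc
      by_cases hcC : c ∈ C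
      · exact Finset.mem_union.2 (Or.inr hcC)
      · exact Finset.mem_union.2 (Or.inl (hsub (Finset.mem_sdiff.2 ⟨hc, hcC⟩)))
    have hins : insert t ((T.erase t) ∪ C) = T ∪ C := by
      rw [← Finset.insert_union, Finset.insert_erase htT]
    have h2 : rk M (T ∪ C) = rk M ((T.erase t) ∪ C) := by
      rw [← hins]
      refine rk_insert_eq M hC'.1 htC' (hC'.2 t htC') ?_
      intro c hc
      have hcC' := (Finset.mem_erase.1 hc).2
      have hct := (Finset.mem_erase.1 hc).1
      rcases Finset.mem_union.1 (hC'sub hcC') with h' | h'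
      · exact Finset.mem_union.2 (Or.inl (Finset.mem_erase.2 ⟨hct, h'⟩))
      · exact Finset.mem_union.2 (Or.inr h')
    -- (T.erase t) ∪ C is dependent since it contains C
    have hdep : ¬ M.Indep ((T.erase t) ∪ C) :=
      fun h => hC.1 (M.subset_indep h Finset.subset_union_right)
    have h3 : rk M ((T.erase t) ∪ C) < ((T.erase t) ∪ C).card :=
      rk_lt_card_of_dep M hdep
    have h4 : ((T.erase t) ∪ C).card = T.card - 1 + C.card := by
      rw [Finset.card_union_of_disjoint (hTdisjC.mono_left (Finset.erase_subset t T)),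
        Finset.card_erase_of_mem htT]
    have hTpos : 1 ≤ T.card := Finset.card_pos.2 ⟨t, htT⟩
    have hCpos : 1 ≤ C.card := Finset.card_pos.2 ⟨x, hxC⟩
    rw [hTC] at h2
    omega
  -- build S
  set S0 : Finset V := (A ∩ C) ∪ ((A \ C) \ T) with hS0
  have hS0card : S0.card = (A ∩ C).card + ((A \ C) \ T).card := by
    apply Finset.card_union_of_disjoint
    exact Finset.disjoint_left.2 fun a ha h =>
      (Finset.mem_sdiff.1 ((Finset.mem_sdiff.1 h).1)).2 (Finset.mem_inter.1 ha).2
  have hACcard : (A ∩ C).card + (A \ C).card = A.card := Finset.card_inter_add_card_sdiff A C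
  have hTsub : T ⊆ A \ C := hTA
  have hsdc : ((A \ C) \ T).card = (A \ C).card - T.card := Finset.card_sdiff_of_subset hTsub
  have hTle : T.card ≤ (A \ C).card := Finset.card_le_card hTsub
  have hS0le : S0.card ≤ C.card - 1 := by
    have hCpos : 1 ≤ C.card := Finset.card_pos.2 ⟨x, hxC⟩
    omega
  have hCleV : C.card - 1 ≤ Fintype.card V := le_trans (by omega) (Finset.card_le_univ C)
  obtain ⟨S, hS0S, _, hScard⟩ := Finset.exists_subsuperset_card_eq
    (Finset.subset_univ S0) hS0le (by simpa using hCleV)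
  refine ⟨S, hScard, ?_, ?_⟩
  · exact (Finset.subset_union_left).trans hS0S
  · -- A \ S ⊆ T
    have hAS : A \ S ⊆ T := by
      intro a ha
      have haA := (Finset.mem_sdiff.1 ha).1
      have haS := (Finset.mem_sdiff.1 ha).2
      have haS0 : a ∉ S0 := fun h => haS (hS0S h)
      by_cases haC : a ∈ C
      · exact absurd (Finset.mem_union.2 (Or.inl (Finset.mem_inter.2 ⟨haA, haC⟩))) haS0
      · by_contra haT
        exact haS0 (Finset.mem_union.2 (Or.inr
          (Finset.mem_sdiff.2 ⟨Finset.mem_sdiff.2 ⟨haA, haC⟩, haT⟩)))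
    exact ⟨hTcontract.1.mono_left hAS,
      fun C' h1 h2 h3 => hTcontract.2 C' h1 h2 (h3.trans hAS)⟩
end
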